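/- arXiv:2012.14611 — 2 statements merged into one kernel-verified Lean document; each statement's English description precedes it below -/
import Mathlib

section
/- Let P be a partial order and f an order automorphism of P. On the quotient of P by the equivalence relation ∼_f: (1) the relation [x] <ˢ [y] defined by 'x' < y' for all x' ∼_f x and all y' ∼_f y' is well defined, irreflexive, and transitive (a strict partial order); (2) the relation [x] ≤ʷ [y] defined by 'x' ≤ y' for some x' ∼_f x and some y' ∼_f y' is well defined, reflexive, transitive, and antisymmetric (a partial order). -/
variable {P : Type*} [PartialOrder P]

/-- `x ∼_f y` iff there are `i j : ℤ` with `f^i x ≤ y ≤ f^j x`. -/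
def orbRel (f : P ≃o P) (x y : P) : Prop :=
  ∃ i j : ℤ, (f ^ i) x ≤ y ∧ y ≤ (f ^ j) x

/-- The strong order on orbitals: `[x] <ˢ [y]` iff `x' < y'` for all `x' ∼_f x` and
`y' ∼_f y`. -/
def strongLt (f : P ≃o P) (x y : P) : Prop :=
  ∀ x' y' : P, orbRel f x' x → orbRel f y' y → x' < y'

/-- The weak order on orbitals: `[x] ≤ʷ [y]` iff `x' ≤ y'` for some `x' ∼_f x` and
`y' ∼_f y`. -/
def weakLe (f : P ≃o P) (x y : P) : Prop :=
  ∃ x' y' : P, orbRel f x' x ∧ orbRel f y' y ∧ x' ≤ y'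

/-!
The weak order is the preorder `x ≼ y :↔ ∃ i, f^i x ≤ y`: an element of `[x]` lies below one of
`[y]` exactly when some iterate of `x` does. The equivalence relation of this preorder is `∼_f`,
since `y ≤ f^j x` is `f^(-j) y ≤ x`. Hence `∼_f` is an equivalence, the weak order is a partial
order on the classes, and the claims about the strong order follow formally.
-/

theorem OrderIso.zpow_apply_zpow_apply {α : Type*} [Preorder α] (f : α ≃o α) (i j : ℤ) (x : α) :
    (f ^ i) ((f ^ j) x) = (f ^ (i + j)) x := by
  rw [zpow_add]
  rfl

theorem OrderIso.le_zpow_apply_iff {α : Type*} [Preorder α] (f : α ≃o α) (j : ℤ) {x y : α} :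
    y ≤ (f ^ j) x ↔ (f ^ (-j)) y ≤ x := by
  rw [zpow_neg]
  exact (f ^ j).symm.le_symm_apply

section OrbitalOrders

variable {f : P ≃o P} {x x' y y' z : P}

theorem orbRel_zpow_apply_self (i : ℤ) : orbRel f ((f ^ i) x) x := by
  have hx : (f ^ (-i)) ((f ^ i) x) = x := by simp
  exact ⟨-i, -i, hx.le, hx.ge⟩

theorem weakLe_iff_exists_zpow_apply_le : weakLe f x y ↔ ∃ i : ℤ, (f ^ i) x ≤ y := by
  constructor
  · rintro ⟨x', y', ⟨-, j, -, hx⟩, ⟨k, -, hy, -⟩, hle⟩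
    refine ⟨k + -j, ?_⟩
    calc (f ^ (k + -j)) x = (f ^ k) ((f ^ (-j)) x) := (f.zpow_apply_zpow_apply k (-j) x).symm
      _ ≤ (f ^ k) x' := (f ^ k).monotone ((f.le_zpow_apply_iff j).1 hx)
      _ ≤ (f ^ k) y' := (f ^ k).monotone hle
      _ ≤ y := hy
  · rintro ⟨i, hi⟩
    exact ⟨(f ^ i) x, y, orbRel_zpow_apply_self i, ⟨0, 0, by simp, by simp⟩, hi⟩

theorem weakLe_refl (x : P) : weakLe f x x :=
  weakLe_iff_exists_zpow_apply_le.2 ⟨0, by simp⟩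

theorem weakLe.trans (hxy : weakLe f x y) (hyz : weakLe f y z) : weakLe f x z := by
  obtain ⟨i, hi⟩ := weakLe_iff_exists_zpow_apply_le.1 hxy
  obtain ⟨j, hj⟩ := weakLe_iff_exists_zpow_apply_le.1 hyz
  refine weakLe_iff_exists_zpow_apply_le.2 ⟨j + i, ?_⟩
  calc (f ^ (j + i)) x = (f ^ j) ((f ^ i) x) := (f.zpow_apply_zpow_apply j i x).symm
    _ ≤ (f ^ j) y := (f ^ j).monotone hi
    _ ≤ z := hj

theorem orbRel_iff_weakLe_and_weakLe : orbRel f x y ↔ weakLe f x y ∧ weakLe f y x := by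
  simp only [weakLe_iff_exists_zpow_apply_le]
  constructor
  · rintro ⟨i, j, hi, hj⟩
    exact ⟨⟨i, hi⟩, ⟨-j, (f.le_zpow_apply_iff j).1 hj⟩⟩
  · rintro ⟨⟨i, hi⟩, ⟨j, hj⟩⟩
    exact ⟨i, -j, hi, (f.le_zpow_apply_iff (-j)).2 (by rwa [neg_neg])⟩

theorem orbRel_refl (x : P) : orbRel f x x :=
  orbRel_iff_weakLe_and_weakLe.2 ⟨weakLe_refl x, weakLe_refl x⟩

theorem orbRel.symm (h : orbRel f x y) : orbRel f y x :=
  orbRel_iff_weakLe_and_weakLe.2 (orbRel_iff_weakLe_and_weakLe.1 h).symm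

theorem orbRel.trans (hxy : orbRel f x y) (hyz : orbRel f y z) : orbRel f x z := by
  rw [orbRel_iff_weakLe_and_weakLe] at hxy hyz ⊢
  exact ⟨hxy.1.trans hyz.1, hyz.2.trans hxy.2⟩

theorem weakLe.of_orbRel (hx : orbRel f x x') (hy : orbRel f y y') (h : weakLe f x y) :
    weakLe f x' y' :=
  ((orbRel_iff_weakLe_and_weakLe.1 hx).2.trans h).trans (orbRel_iff_weakLe_and_weakLe.1 hy).1

theorem weakLe_congr (hx : orbRel f x x') (hy : orbRel f y y') : weakLe f x y ↔ weakLe f x' y' :=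
  ⟨weakLe.of_orbRel hx hy, weakLe.of_orbRel hx.symm hy.symm⟩

theorem strongLt.of_orbRel (hx : orbRel f x x') (hy : orbRel f y y') (h : strongLt f x y) :
    strongLt f x' y' :=
  fun a b ha hb ↦ h a b (ha.trans hx.symm) (hb.trans hy.symm)

theorem strongLt_congr (hx : orbRel f x x') (hy : orbRel f y y') :
    strongLt f x y ↔ strongLt f x' y' :=
  ⟨strongLt.of_orbRel hx hy, strongLt.of_orbRel hx.symm hy.symm⟩

theorem strongLt_irrefl (x : P) : ¬ strongLt f x x :=
  fun h ↦ lt_irrefl x (h x x (orbRel_refl x) (orbRel_refl x))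

theorem strongLt.trans (hxy : strongLt f x y) (hyz : strongLt f y z) : strongLt f x z :=
  fun a c ha hc ↦ (hxy a y ha (orbRel_refl y)).trans (hyz y c (orbRel_refl y) hc)

end OrbitalOrders

/-- On the quotient of `P` by `∼_f`: (1) the strong order is well defined on classes,
irreflexive, and transitive (a strict partial order); (2) the weak order is well defined
on classes, reflexive, transitive, and antisymmetric (with equality of classes given by
`∼_f`), i.e. a partial order. -/
theorem orbital_orders (f : P ≃o P) :
    ((∀ x x' y y' : P, orbRel f x x' → orbRel f y y' →
        (strongLt f x y ↔ strongLt f x' y')) ∧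
      (∀ x : P, ¬ strongLt f x x) ∧
      (∀ x y z : P, strongLt f x y → strongLt f y z → strongLt f x z)) ∧
    ((∀ x x' y y' : P, orbRel f x x' → orbRel f y y' →
        (weakLe f x y ↔ weakLe f x' y')) ∧
      (∀ x : P, weakLe f x x) ∧
      (∀ x y z : P, weakLe f x y → weakLe f y z → weakLe f x z) ∧
      (∀ x y : P, weakLe f x y → weakLe f y x → orbRel f x y)) :=
  ⟨⟨fun _ _ _ _ ↦ strongLt_congr, strongLt_irrefl, fun _ _ _ ↦ strongLt.trans⟩,
    ⟨fun _ _ _ _ ↦ weakLe_congr, weakLe_refl, fun _ _ _ ↦ weakLe.trans,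
      fun _ _ hxy hyx ↦ orbRel_iff_weakLe_and_weakLe.2 ⟨hxy, hyx⟩⟩⟩
end

section
/- Let P be a countable partial order satisfying the one-point extension property, f an order automorphism of P, and x ∈ P with parity(x, f) ≠ 0. Then the orbital of x, with the induced order, is order-isomorphic to P if and only if the orbital of x is upper-directed (any two of its elements have an upper bound in it). -/
variable {P : Type*} [PartialOrder P]

/-- A partial order `P` satisfies the one-point extension property if for all finite
subsets `A, B, C` with `a < b` for `a ∈ A`, `b ∈ B`, no `c ∈ C` below any `a ∈ A`, and
no `b ∈ B` below any `c ∈ C`, there is a point `z` strictly above every `a ∈ A`,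
strictly below every `b ∈ B`, and incomparable to every `c ∈ C`. A countable partial
order with this property is the random poset. -/
def OnePointExt (P : Type*) [PartialOrder P] : Prop :=
  ∀ A B C : Finset P,
    (∀ a ∈ A, ∀ b ∈ B, a < b) →
    (∀ c ∈ C, ∀ a ∈ A, ¬ c ≤ a) →
    (∀ b ∈ B, ∀ c ∈ C, ¬ b ≤ c) →
    ∃ z : P, (∀ a ∈ A, a < z) ∧ (∀ b ∈ B, z < b) ∧ (∀ c ∈ C, ¬ z ≤ c ∧ ¬ c ≤ z)

/-- The spiral length of `x` under `f`: the least `n ≥ 1` such that `x` and `f^n x`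
are comparable, and `∞` if no such `n` exists. -/
noncomputable def spiral (f : P ≃o P) (x : P) : ℕ∞ :=
  sInf ((fun m : ℕ => (m : ℕ∞)) ''
    {m : ℕ | 1 ≤ m ∧ (x ≤ (f ^ (m : ℤ)) x ∨ (f ^ (m : ℤ)) x ≤ x)})

open Classical in
/-- The parity of `x` under `f`: `+1` if `sp(x,f) = n < ∞` and `x < f^n x`, `-1` if
`sp(x,f) = n < ∞` and `f^n x < x`, and `0` otherwise. -/
noncomputable def parity (f : P ≃o P) (x : P) : ℤ :=
  if ∃ n : ℕ, spiral f x = (n : ℕ∞) ∧ x < (f ^ (n : ℤ)) x then 1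
  else if ∃ n : ℕ, spiral f x = (n : ℕ∞) ∧ (f ^ (n : ℤ)) x < x then -1
  else 0

/-!
Suppose `sp(x, f) = n` and `x < f^n x`; the case `f^n x < x` reduces to this one through `f⁻¹`,
which has the same orbitals. The shifts `m` with `x ≤ f^m x` form an additive submonoid of `ℤ`
which, by minimality of `n`, contains no negative number. If the orbital is upper-directed, an
upper bound of `x` and `f x` lies below some `f^j x`, so both `j - 1` and `j` are shifts; hence
so is every large `m`, and then `x < f^m x`. Every finite part of the orbital thus lies strictly
between two of its points `f^L x < f^U x`, and as the orbital is order-convex it inherits the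
one-point extension property from `P`; a back-and-forth argument makes it isomorphic to `P`.
Conversely, the one-point extension property makes `P`, and with it the orbital, upper-directed.
-/

section BackAndForth

variable {X Y : Type*} [PartialOrder X] [PartialOrder Y]

theorem nonempty_orderIso_of_rel (R : X → Y → Prop) (hX : ∀ a, ∃ b, R a b)
    (hY : ∀ b, ∃ a, R a b) (hR : ∀ a b a' b', R a b → R a' b' → (a ≤ a' ↔ b ≤ b')) :
    Nonempty (X ≃o Y) := by
  choose F hF using hX
  choose G hG using hY
  exact ⟨{ toFun := F
           invFun := G
           left_inv := fun a => le_antisymm ((hR _ _ _ _ (hG (F a)) (hF a)).2 le_rfl)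
             ((hR _ _ _ _ (hF a) (hG (F a))).2 le_rfl)
           right_inv := fun b => le_antisymm ((hR _ _ _ _ (hF (G b)) (hG b)).1 le_rfl)
             ((hR _ _ _ _ (hG b) (hF (G b))).1 le_rfl)
           map_rel_iff' := fun {a a'} => (hR _ _ _ _ (hF a) (hF a')).symm }⟩

variable (X Y) in
/-- Finite partial isomorphisms between `X` and `Y`, given by their graphs and ordered by
inclusion. -/
abbrev FinPartialOrderIso : Type _ :=
  {p : Finset (X × Y) // ∀ q ∈ p, ∀ r ∈ p, (q.1 ≤ r.1 ↔ q.2 ≤ r.2)}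

namespace FinPartialOrderIso

open Classical in
noncomputable def symm (p : FinPartialOrderIso X Y) : FinPartialOrderIso Y X :=
  ⟨p.1.image Prod.swap, by
    simp only [Finset.forall_mem_image]
    exact fun q hq r hr => (p.2 q hq r hr).symm⟩

theorem mem_symm {p : FinPartialOrderIso X Y} {a : X} {b : Y} :
    (b, a) ∈ p.symm.1 ↔ (a, b) ∈ p.1 := by
  simp [symm]

theorem symm_symm (p : FinPartialOrderIso X Y) : p.symm.symm = p := by
  ext ⟨a, b⟩
  exact mem_symm.trans mem_symm

theorem symm_le_symm {p q : FinPartialOrderIso X Y} (h : p ≤ q) : p.symm ≤ q.symm :=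
  fun ⟨_, _⟩ hba => mem_symm.2 (h (mem_symm.1 hba))

theorem lt_iff_lt (p : FinPartialOrderIso X Y) {q r : X × Y} (hq : q ∈ p.1) (hr : r ∈ p.1) :
    q.1 < r.1 ↔ q.2 < r.2 := by
  simp only [lt_iff_le_not_ge, p.2 q hq r hr, p.2 r hr q hq]

open Classical in
noncomputable def insert (p : FinPartialOrderIso X Y) (a : X) (b : Y)
    (h : ∀ q ∈ p.1, (q.1 ≤ a ↔ q.2 ≤ b) ∧ (a ≤ q.1 ↔ b ≤ q.2)) : FinPartialOrderIso X Y :=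
  ⟨Insert.insert (a, b) p.1, by
    simp only [Finset.mem_insert, forall_eq_or_imp, le_refl, iff_self, true_and]
    exact ⟨fun r hr => (h r hr).2, fun q hq => ⟨(h q hq).1, p.2 q hq⟩⟩⟩

theorem exists_across (hY : OnePointExt Y) (p : FinPartialOrderIso X Y) (a : X) :
    ∃ b : Y, ∀ q ∈ p.1, (q.1 ≤ a ↔ q.2 ≤ b) ∧ (a ≤ q.1 ↔ b ≤ q.2) := by
  classical
  by_cases ha : ∃ r ∈ p.1, r.1 = a
  · obtain ⟨r, hr, rfl⟩ := ha
    exact ⟨r.2, fun q hq => ⟨p.2 q hq r hr, p.2 r hr q hq⟩⟩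
  push Not at ha
  obtain ⟨b, hbA, hbB, hbC⟩ := hY ((p.1.filter (·.1 < a)).image Prod.snd)
    ((p.1.filter (a < ·.1)).image Prod.snd)
    ((p.1.filter fun q => ¬ q.1 ≤ a ∧ ¬ a ≤ q.1).image Prod.snd)
    (by
      simp only [Finset.forall_mem_image, Finset.mem_filter, and_imp]
      exact fun q hq hqa r hr har => (p.lt_iff_lt hq hr).1 (hqa.trans har))
    (by
      simp only [Finset.forall_mem_image, Finset.mem_filter, and_imp]
      exact fun q hq hqa _ r hr hra hle => hqa (((p.2 q hq r hr).2 hle).trans hra.le))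
    (by
      simp only [Finset.forall_mem_image, Finset.mem_filter, and_imp]
      exact fun r hr har q hq _ haq hle => haq (har.le.trans ((p.2 r hr q hq).2 hle)))
  simp only [Finset.forall_mem_image, Finset.mem_filter, and_imp] at hbA hbB hbC
  refine ⟨b, fun q hq => ?_⟩
  by_cases hqa : q.1 ≤ a
  · have hlt := hbA hq (lt_of_le_of_ne hqa (ha q hq))
    exact ⟨iff_of_true hqa hlt.le, iff_of_false (fun h => (ha q hq) (le_antisymm hqa h))
      hlt.not_ge⟩
  by_cases haq : a ≤ q.1
  · have hlt := hbB hq (lt_of_le_of_ne haq (ha q hq).symm)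
    exact ⟨iff_of_false hqa hlt.not_ge, iff_of_true haq hlt.le⟩
  · have := hbC hq hqa haq
    exact ⟨iff_of_false hqa this.2, iff_of_false haq this.1⟩

theorem exists_le_mem_fst (hY : OnePointExt Y) (p : FinPartialOrderIso X Y) (a : X) :
    ∃ q ∈ {q : FinPartialOrderIso X Y | ∃ b, (a, b) ∈ q.1}, p ≤ q := by
  classical
  obtain ⟨b, hb⟩ := p.exists_across hY a
  exact ⟨p.insert a b hb, ⟨b, Finset.mem_insert_self _ _⟩, Finset.subset_insert _ _⟩

theorem exists_le_mem_snd (hX : OnePointExt X) (p : FinPartialOrderIso X Y) (b : Y) :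
    ∃ q ∈ {q : FinPartialOrderIso X Y | ∃ a, (a, b) ∈ q.1}, p ≤ q := by
  obtain ⟨q, ⟨a, ha⟩, hpq⟩ := p.symm.exists_le_mem_fst hX b
  exact ⟨q.symm, ⟨a, mem_symm.2 ha⟩, p.symm_symm ▸ symm_le_symm hpq⟩

end FinPartialOrderIso

theorem OnePointExt.nonempty_orderIso [Countable X] [Countable Y] (hX : OnePointExt X)
    (hY : OnePointExt Y) : Nonempty (X ≃o Y) := by
  cases nonempty_encodable X
  cases nonempty_encodable Y
  let D : X ⊕ Y → Order.Cofinal (FinPartialOrderIso X Y) :=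
    Sum.elim (fun a => ⟨_, (·.exists_le_mem_fst hY a)⟩) (fun b => ⟨_, (·.exists_le_mem_snd hX b)⟩)
  let I := Order.idealOfCofinals ⟨∅, by simp⟩ D
  refine nonempty_orderIso_of_rel (fun a b => ∃ p ∈ I, (a, b) ∈ p.1) (fun a => ?_) (fun b => ?_)
    (fun a b a' b' ⟨p, hp, hab⟩ ⟨p', hp', hab'⟩ => ?_)
  · obtain ⟨p, ⟨b, hb⟩, hp⟩ := Order.cofinal_meets_idealOfCofinals _ D (.inl a)
    exact ⟨b, p, hp, hb⟩
  · obtain ⟨p, ⟨a, ha⟩, hp⟩ := Order.cofinal_meets_idealOfCofinals _ D (.inr b)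
    exact ⟨a, p, hp, ha⟩
  · obtain ⟨q, -, hpq, hp'q⟩ := I.directed p hp p' hp'
    exact q.2 _ (hpq hab) _ (hp'q hab')

end BackAndForth

theorem OnePointExt.exists_ge_ge (hP : OnePointExt P) (a b : P) : ∃ c, a ≤ c ∧ b ≤ c := by
  classical
  obtain ⟨c, hc, -⟩ := hP {a, b} ∅ ∅ (by simp) (by simp) (by simp)
  exact ⟨c, (hc a (by simp)).le, (hc b (by simp)).le⟩

theorem OnePointExt.subtype (hP : OnePointExt P) {S : Set P} (hS : S.OrdConnected)
    (hbdd : ∀ T : Finset S, ∃ l u : S, l < u ∧ ∀ t ∈ T, l < t ∧ t < u) : OnePointExt S := by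
  classical
  intro A B C hAB hCA hBC
  obtain ⟨l, u, hlu, hT⟩ := hbdd (A ∪ B ∪ C)
  obtain ⟨z, hzA, hzB, hzC⟩ := hP (insert l.1 (A.image (↑))) (insert u.1 (B.image (↑)))
    (C.image (↑))
    (by
      simp only [Finset.forall_mem_insert, Finset.forall_mem_image]
      exact ⟨⟨hlu, fun b hb => (hT b (by simp [hb])).1⟩,
        fun a ha => ⟨(hT a (by simp [ha])).2, hAB a ha⟩⟩)
    (by
      simp only [Finset.forall_mem_insert, Finset.forall_mem_image]
      exact fun c hc => ⟨(hT c (by simp [hc])).1.not_ge, hCA c hc⟩)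
    (by
      simp only [Finset.forall_mem_insert, Finset.forall_mem_image]
      exact ⟨fun c hc => (hT c (by simp [hc])).2.not_ge, hBC⟩)
  simp only [Finset.forall_mem_insert, Finset.forall_mem_image] at hzA hzB hzC
  exact ⟨⟨z, hS.out l.2 u.2 ⟨hzA.1.le, hzB.1.le⟩⟩, hzA.2, hzB.2, hzC⟩

open Filter

namespace OrderIso

variable (f : P ≃o P) (x : P)

theorem zpow_apply_zpow_apply_s19 (a b : ℤ) : (f ^ a) ((f ^ b) x) = (f ^ (a + b)) x := by
  rw [zpow_add, RelIso.mul_apply]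

theorem zpow_apply_le_zpow_apply_iff (a b : ℤ) :
    (f ^ a) x ≤ (f ^ b) x ↔ x ≤ (f ^ (b - a)) x := by
  have := (f ^ a).le_iff_le (x := x) (y := (f ^ (b - a)) x)
  rwa [zpow_apply_zpow_apply_s19, add_sub_cancel] at this

theorem zpow_apply_lt_zpow_apply_iff (a b : ℤ) :
    (f ^ a) x < (f ^ b) x ↔ x < (f ^ (b - a)) x := by
  have := (f ^ a).lt_iff_lt (x := x) (y := (f ^ (b - a)) x)
  rwa [zpow_apply_zpow_apply_s19, add_sub_cancel] at this

theorem le_zpow_neg_apply_iff (m : ℤ) : x ≤ (f ^ (-m)) x ↔ (f ^ m) x ≤ x := by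
  simpa using (f.zpow_apply_le_zpow_apply_iff x m 0).symm

theorem lt_zpow_neg_apply_iff (m : ℤ) : x < (f ^ (-m)) x ↔ (f ^ m) x < x := by
  simpa using (f.zpow_apply_lt_zpow_apply_iff x m 0).symm

theorem inv_zpow_apply (m : ℤ) : (f⁻¹ ^ m) x = (f ^ (-m)) x := by
  rw [inv_zpow']

end OrderIso

theorem orbRel_zpow_apply (f : P ≃o P) (x : P) (k : ℤ) : orbRel f x ((f ^ k) x) :=
  ⟨k, k, le_rfl, le_rfl⟩

theorem orbRel_inv (f : P ≃o P) (x : P) : orbRel f⁻¹ x = orbRel f x := by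
  ext y
  constructor
  · rintro ⟨i, j, hi, hj⟩
    rw [OrderIso.inv_zpow_apply] at hi hj
    exact ⟨-i, -j, hi, hj⟩
  · rintro ⟨i, j, hi, hj⟩
    refine ⟨-i, -j, ?_, ?_⟩ <;> rwa [OrderIso.inv_zpow_apply, neg_neg]

theorem orbRel_ordConnected (f : P ≃o P) (x : P) : {y | orbRel f x y}.OrdConnected :=
  ⟨fun _ ⟨i, _, hi, _⟩ _ ⟨_, j, _, hj⟩ _ hz => ⟨i, j, hi.trans hz.1, hz.2.trans hj⟩⟩

def upShifts (f : P ≃o P) (x : P) : AddSubmonoid ℤ where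
  carrier := {m | x ≤ (f ^ m) x}
  zero_mem' := by simp
  add_mem' {a b} ha hb :=
    hb.trans ((f.zpow_apply_le_zpow_apply_iff x b (a + b)).2 (by rwa [add_sub_cancel_right]))

variable {f : P ≃o P} {x y : P}

theorem mem_upShifts {m : ℤ} : m ∈ upShifts f x ↔ x ≤ (f ^ m) x :=
  Iff.rfl

theorem nonneg_of_mem_upShifts {n : ℕ} (hn : 0 < n) (hlt : x < (f ^ (n : ℤ)) x)
    (hmin : ∀ m : ℕ, 0 < m → m < n → ¬ x ≤ (f ^ (m : ℤ)) x) {m : ℤ}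
    (hm : m ∈ upShifts f x) : 0 ≤ m := by
  -- `m % n` is reached from `m` by adding copies of `n`: minimality of `n` excludes
  -- `0 < m % n`, and `m % n = 0` would give `-n ∈ upShifts f x`, i.e. `f^n x ≤ x`.
  by_contra! hneg
  have hshift : ∀ k : ℤ, 0 ≤ k → m + k * n ∈ upShifts f x := by
    intro k hk
    lift k to ℕ using hk
    simpa using add_mem hm (nsmul_mem (mem_upShifts.2 hlt.le) k)
  have hdiv := Int.mul_ediv_add_emod m n
  have hq : m / n < 0 := Int.ediv_neg_of_neg_of_pos hneg (by omega)
  have hr : m % n ∈ upShifts f x := by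
    convert hshift (-(m / n)) (by omega) using 1
    linear_combination hdiv
  obtain hr0 | hr0 := (Int.emod_nonneg m (b := n) (by omega)).eq_or_lt
  · have : -(n : ℤ) ∈ upShifts f x := by
      convert hshift (-(m / n) - 1) (by omega) using 1
      linear_combination hdiv + hr0
    exact hlt.not_ge ((f.le_zpow_neg_apply_iff x n).1 this)
  · have hrn := Int.emod_lt_of_pos m (b := n) (by omega)
    exact hmin (m % n).toNat (by omega) (by omega) (by rwa [Int.toNat_of_nonneg hr0.le])

theorem lt_zpow_apply_of_mem_upShifts (hD : ∀ m ∈ upShifts f x, 0 ≤ m) {m : ℤ}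
    (hm : m ∈ upShifts f x) (hm0 : m ≠ 0) : x < (f ^ m) x := by
  refine lt_of_le_of_ne hm fun h => hm0 (le_antisymm ?_ (hD m hm))
  have := hD (-m) ((f.le_zpow_neg_apply_iff x m).2 h.ge)
  omega

theorem AddSubmonoid.eventually_mem_of_mem_of_add_one_mem {S : AddSubmonoid ℤ} {v : ℕ}
    (hv : (v : ℤ) ∈ S) (hv1 : (v : ℤ) + 1 ∈ S) : ∀ᶠ m in atTop, m ∈ S := by
  refine eventually_atTop.2 ⟨v * v, fun m hm => ?_⟩
  lift m to ℕ using by nlinarith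
  obtain rfl | hv0 := v.eq_zero_or_pos
  · simpa using nsmul_mem hv1 m
  -- write `m = q v + r` with `r < v ≤ q`; then `m = (q - r) v + r (v + 1)`
  have hrq : m % v ≤ m / v :=
    ((Nat.mod_lt m hv0).trans_le ((Nat.le_div_iff_mul_le hv0).2 (by exact_mod_cast hm))).le
  have hm : (m : ℤ) = (m / v - m % v) • (v : ℤ) + (m % v) • ((v : ℤ) + 1) := by
    have := congrArg (Nat.cast (R := ℤ)) (Nat.div_add_mod m v)
    simp only [nsmul_eq_mul, Nat.cast_sub hrq]
    push_cast at this ⊢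
    linear_combination -this
  rw [hm]
  exact add_mem (nsmul_mem hv _) (nsmul_mem hv1 _)

theorem eventually_lt_zpow_apply {n : ℕ} (hn : 0 < n) (hlt : x < (f ^ (n : ℤ)) x)
    (hmin : ∀ m : ℕ, 0 < m → m < n → ¬ x ≤ (f ^ (m : ℤ)) x)
    (hdir : DirectedOn (· ≤ ·) {y | orbRel f x y}) : ∀ᶠ m : ℤ in atTop, x < (f ^ m) x := by
  have hD := fun m => nonneg_of_mem_upShifts hn hlt hmin (m := m)
  obtain ⟨c, ⟨-, j, -, hcj⟩, hxc, hfxc⟩ :=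
    hdir x (by simpa using orbRel_zpow_apply f x 0) (f x) (by simpa using orbRel_zpow_apply f x 1)
  have hj : j ∈ upShifts f x := hxc.trans hcj
  have hj1 : j - 1 ∈ upShifts f x :=
    (f.zpow_apply_le_zpow_apply_iff x 1 j).1 (by simpa using hfxc.trans hcj)
  obtain ⟨v, hv⟩ := Int.eq_ofNat_of_zero_le (hD _ hj1)
  have hv1 : (v : ℤ) + 1 ∈ upShifts f x := by rwa [← hv, sub_add_cancel]
  filter_upwards [AddSubmonoid.eventually_mem_of_mem_of_add_one_mem (hv ▸ hj1) hv1,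
    eventually_ne_atTop 0] with m hm hm0
  exact lt_zpow_apply_of_mem_upShifts hD hm hm0

theorem orbRel.eventually_zpow_apply_lt (h : ∀ᶠ m : ℤ in atTop, x < (f ^ m) x)
    (hy : orbRel f x y) : ∀ᶠ k : ℤ in atBot, (f ^ k) x < y := by
  obtain ⟨N, hN⟩ := eventually_atTop.1 h
  obtain ⟨i, -, hi, -⟩ := hy
  exact eventually_atBot.2 ⟨i - N, fun k hk =>
    ((f.zpow_apply_lt_zpow_apply_iff x k i).2 (hN _ (by omega))).trans_le hi⟩

theorem orbRel.eventually_lt_zpow_apply (h : ∀ᶠ m : ℤ in atTop, x < (f ^ m) x)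
    (hy : orbRel f x y) : ∀ᶠ k : ℤ in atTop, y < (f ^ k) x := by
  obtain ⟨N, hN⟩ := eventually_atTop.1 h
  obtain ⟨-, j, -, hj⟩ := hy
  exact eventually_atTop.2 ⟨j + N, fun k hk =>
    hj.trans_lt ((f.zpow_apply_lt_zpow_apply_iff x j k).2 (hN _ (by omega)))⟩

theorem OnePointExt.orbital (hP : OnePointExt P) (h : ∀ᶠ m : ℤ in atTop, x < (f ^ m) x) :
    OnePointExt {y | orbRel f x y} := by
  classical
  refine hP.subtype (orbRel_ordConnected f x) fun T => ?_
  let T' := insert ⟨x, by simpa using orbRel_zpow_apply f x 0⟩ T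
  obtain ⟨L, hL⟩ := ((eventually_all_finset T').2 fun t _ => t.2.eventually_zpow_apply_lt h).exists
  obtain ⟨U, hU⟩ := ((eventually_all_finset T').2 fun t _ => t.2.eventually_lt_zpow_apply h).exists
  refine ⟨⟨_, orbRel_zpow_apply f x L⟩, ⟨_, orbRel_zpow_apply f x U⟩,
    (hL _ (T.mem_insert_self _)).trans (hU _ (T.mem_insert_self _)),
    fun t ht => ⟨hL t (T.mem_insert_of_mem ht), hU t (T.mem_insert_of_mem ht)⟩⟩

theorem spiral_eq_natCast {n : ℕ} (h : spiral f x = n) :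
    0 < n ∧ ∀ m : ℕ, 0 < m → m < n → ¬ (x ≤ (f ^ (m : ℤ)) x ∨ (f ^ (m : ℤ)) x ≤ x) := by
  set S := {m : ℕ | 1 ≤ m ∧ (x ≤ (f ^ (m : ℤ)) x ∨ (f ^ (m : ℤ)) x ≤ x)}
  replace h : sInf ((fun m : ℕ => (m : ℕ∞)) '' S) = n := h
  have hS : S.Nonempty := by
    rw [Set.nonempty_iff_ne_empty]
    rintro hS
    simp [hS] at h
  have hn : n = sInf S := by
    rw [sInf_image, ← ENat.natCast_sInf hS] at h
    exact_mod_cast h.symm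
  subst hn
  exact ⟨Nat.sInf_mem hS |>.1, fun m hm hmn hcomp => Nat.notMem_of_lt_sInf hmn ⟨hm, hcomp⟩⟩

theorem exists_spiral_eq_of_parity_ne_zero (h : parity f x ≠ 0) :
    ∃ n : ℕ, spiral f x = n ∧ (x < (f ^ (n : ℤ)) x ∨ (f ^ (n : ℤ)) x < x) := by
  unfold parity at h
  split_ifs at h with h₁ h₂
  · obtain ⟨n, hn, hlt⟩ := h₁
    exact ⟨n, hn, .inl hlt⟩
  · obtain ⟨n, hn, hlt⟩ := h₂
    exact ⟨n, hn, .inr hlt⟩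
  · exact absurd rfl h

theorem exists_eventually_lt_zpow_apply (hpar : parity f x ≠ 0)
    (hdir : DirectedOn (· ≤ ·) {y | orbRel f x y}) :
    ∃ g : P ≃o P, orbRel g x = orbRel f x ∧ ∀ᶠ m : ℤ in atTop, x < (g ^ m) x := by
  obtain ⟨n, hsp, hlt | hgt⟩ := exists_spiral_eq_of_parity_ne_zero hpar <;>
    obtain ⟨hn, hmin⟩ := spiral_eq_natCast hsp
  · exact ⟨f, rfl, eventually_lt_zpow_apply hn hlt (fun m hm hmn h => hmin m hm hmn (.inl h)) hdir⟩
  · refine ⟨f⁻¹, orbRel_inv f x, eventually_lt_zpow_apply hn ?_ (fun m hm hmn h => ?_)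
      (orbRel_inv f x ▸ hdir)⟩
    · rwa [OrderIso.inv_zpow_apply, OrderIso.lt_zpow_neg_apply_iff]
    · rw [OrderIso.inv_zpow_apply, OrderIso.le_zpow_neg_apply_iff] at h
      exact hmin m hm hmn (.inr h)

/-- For `P` the random poset (countable with the one-point extension property),
`f` an automorphism, and `x` of non-zero parity, the orbital of `x` with the induced
order is order-isomorphic to `P` if and only if it is upper-directed. -/
theorem orbital_iso_random_iff_directed [Countable P] (hP : OnePointExt P)
    (f : P ≃o P) (x : P) (hpar : parity f x ≠ 0) :
    Nonempty ({y : P | orbRel f x y} ≃o P) ↔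
      (∀ a b : P, orbRel f x a → orbRel f x b →
        ∃ c : P, orbRel f x c ∧ a ≤ c ∧ b ≤ c) := by
  constructor
  · rintro ⟨e⟩ a b ha hb
    obtain ⟨c, hac, hbc⟩ := hP.exists_ge_ge (e ⟨a, ha⟩) (e ⟨b, hb⟩)
    exact ⟨e.symm c, (e.symm c).2, e.le_symm_apply.2 hac, e.le_symm_apply.2 hbc⟩
  · intro hdir
    obtain ⟨g, hg, hgx⟩ := exists_eventually_lt_zpow_apply hpar fun a ha b hb => hdir a b ha hb
    rw [← hg]
    exact (hP.orbital hgx).nonempty_orderIso hP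
end
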